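/- arXiv:2104.10071 — 3 statements merged into one kernel-verified Lean document; each statement's English description precedes it below -/
import Mathlib

section
/- Let A be a complex Banach algebra, Z : A → ℂ a continuous linear functional, and Ω, b, C ∈ A with Ω·b − b·Ω = −C, Ω·C = C·Ω, and Z((b − C)·a) = 0 for every a ∈ A. Then Z(exp(Ω)·b·x) = 0 for every x ∈ A. (This is the abstract content of Lemma A.2 of the paper: the functional Z^κ{e^{Ω̂} · } acts as a left vacuum on the creation operators, Z^κ{e^{Ω̂} 𝐛*(ζ) X^{(α+1)}} = 0 and Z^κ{e^{Ω̂} 𝐜*(ζ) X^{(α−1)}} = 0, because the JMS theorem gives Z^κ{(𝐛*(ζ) − C(ζ)) e^{Ω̂} X} = 0.) -/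
/-!
Since `C` commutes with `Ω`, the relation `Ω b = b Ω - C` iterates to
`Ω ^ (n + 1) b = b Ω ^ (n + 1) - (n + 1) C Ω ^ n`. Summed against the exponential series this
says `exp Ω · b = (b - C) · exp Ω`, and `Z` kills everything of the form `(b - C) · a`.
-/

open NormedSpace
open scoped Nat

theorem pow_succ_mul_eq_of_mul_sub_mul_eq_neg {R : Type*} [Ring R] {Ω b C : R}
    (h : Ω * b - b * Ω = -C) (hC : Commute Ω C) (n : ℕ) :
    Ω ^ (n + 1) * b = b * Ω ^ (n + 1) - (n + 1) • (C * Ω ^ n) := by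
  have hΩb : Ω * b = b * Ω - C := by rw [sub_eq_iff_eq_add.mp h]; abel
  induction n with
  | zero => simpa using hΩb
  | succ n ih =>
    have hCΩ : Ω * (C * Ω ^ n) = C * Ω ^ (n + 1) := by
      rw [← mul_assoc, hC.eq, mul_assoc, ← pow_succ']
    rw [pow_succ', mul_assoc, ih, mul_sub, ← mul_assoc, hΩb, mul_smul_comm, hCΩ,
      succ_nsmul _ (n + 1)]
    noncomm_ring

theorem exp_mul_eq_sub_mul_exp_of_mul_sub_mul_eq_neg (𝕂 : Type*) [RCLike 𝕂] {A : Type*}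
    [NormedRing A] [NormedAlgebra 𝕂 A] [CompleteSpace A] {Ω b C : A}
    (h : Ω * b - b * Ω = -C) (hC : Commute Ω C) :
    exp Ω * b = (b - C) * exp Ω := by
  have hexp := exp_series_hasSum_exp' (𝕂 := 𝕂) Ω
  have hcomm : HasSum (fun n : ℕ => (n !⁻¹ : 𝕂) • (Ω ^ n * b - b * Ω ^ n))
      (exp Ω * b - b * exp Ω) := by
    simpa only [smul_sub, smul_mul_assoc, mul_smul_comm] using
      (hexp.mul_right b).sub (hexp.mul_left b)
  have hshift : HasSum (fun n : ℕ => -((n !⁻¹ : 𝕂) • (C * Ω ^ n))) (-(C * exp Ω)) := by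
    simpa only [mul_smul_comm] using (hexp.mul_left C).neg
  have hterm (n : ℕ) : (((n + 1)! : ℕ)⁻¹ : 𝕂) • (Ω ^ (n + 1) * b - b * Ω ^ (n + 1))
      = -((n !⁻¹ : 𝕂) • (C * Ω ^ n)) := by
    rw [pow_succ_mul_eq_of_mul_sub_mul_eq_neg h hC, sub_sub_cancel_left, smul_neg,
      ← Nat.cast_smul_eq_nsmul 𝕂, smul_smul, Nat.factorial_succ]
    push_cast
    field_simp
  have hcommutator : exp Ω * b - b * exp Ω = -(C * exp Ω) := by
    refine hcomm.unique ((hasSum_nat_add_iff' 1).mp ?_)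
    simpa [hterm] using hshift
  rw [sub_mul, sub_eq_iff_eq_add.mp hcommutator]
  abel

/-- Lemma A.2 (abstract form): if `Ω·b − b·Ω = −C`, `Ω·C = C·Ω`, and the continuous
linear functional `Z` kills `(b − C)·a` for every `a`, then `Z(exp(Ω)·b·x) = 0` for
every `x`. -/
theorem left_vacuum_creation {A : Type*} [NormedRing A] [NormedAlgebra ℂ A]
    [CompleteSpace A] (Z : A →L[ℂ] ℂ) (Ω b C : A)
    (h1 : Ω * b - b * Ω = -C) (h2 : Ω * C = C * Ω)
    (hZ : ∀ a : A, Z ((b - C) * a) = 0) :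
    ∀ x : A, Z (exp Ω * b * x) = 0 := by
  intro x
  rw [exp_mul_eq_sub_mul_exp_of_mul_sub_mul_eq_neg ℂ h1 h2, mul_assoc]
  exact hZ _
end

section
/- Let A be a complex Banach algebra, Z : A → ℂ a continuous linear functional, Ω₀, Ω̂ ∈ A with Ω₀·Ω̂ = Ω̂·Ω₀, v ∈ A, families b, c, C : Fin l → A, and scalars ω : Fin l × Fin l → ℂ. Assume: (i) Ω̂·b_j − b_j·Ω̂ = −C_j and Ω̂·C_j = C_j·Ω̂ for each j; (ii) Z(exp(Ω₀)·b_j·a) = 0 for every a ∈ A and every j; (iii) b_i·b_j = −b_j·b_i, b_i·c_k = −c_k·b_i, and C_j·b_i = −b_i·C_j for all i, j, k; (iv) C_j·c_k + c_k·C_j = ω_{j,k}·1 for all j, k; (v) C_j·v = 0 for all j. Then for every fixed j, Z(exp(Ω₀−Ω̂)·(b_1⋯b_l)·(c_l⋯c_1)·v) = Σ_{k=1}^l (−1)^{j+k} ω_{j,k} · Z(exp(Ω₀−Ω̂)·(b_1⋯b̂_j⋯b_l)·(c_l⋯ĉ_k⋯c_1)·v), where b̂_j and ĉ_k indicate omitted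 factors. (This is the abstract content of Lemma A.4 of the paper: the Laplace-expansion recursion tr^α{e^{Ω} 𝓑^{(l)} 𝓒^{(l)} q^{2αS(0)}} = Σ_k (−1)^{j+k} ω(ζ_j^+, ζ_k^−; α) tr^α{e^{Ω} 𝓑_j^{(l)} 𝓒_k^{(l)} q^{2αS(0)}}.) -/
/-!
Since `[-Ω̂, b_j] = C_j` commutes with `Ω̂`, `e^{-Ω̂} b_j = (b_j + C_j) e^{-Ω̂}`; with (ii)
this gives `Z(e^{Ω₀-Ω̂} C_j a) = Z(e^{Ω₀-Ω̂} b_j a)` for all `a`. Starting from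
`0 = Z(e^{Ω₀-Ω̂} (b_1 ⋯ b̂_j ⋯ b_l)(c_l ⋯ c_1) C_j v)`, move `C_j` to the left: through
`c_l ⋯ c_1` it produces the terms `ω_{j,k}` with `ĉ_k` omitted, and through the `b`'s only a
sign; trading the resulting `C_j` for `b_j` then reassembles `b_1 ⋯ b_l`.
-/

open NormedSpace

section Anticommutation

variable {R A : Type*} [CommRing R] [Ring A] [Algebra R A]

theorem List.prod_mul_eq_neg_one_pow_smul {x : A} :
    ∀ {L : List A}, (∀ y ∈ L, y * x = -(x * y)) →
      L.prod * x = (-1 : R) ^ L.length • (x * L.prod)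
  | [], _ => by simp
  | a :: L, h => by
    rw [List.prod_cons, mul_assoc,
      prod_mul_eq_neg_one_pow_smul fun y hy => h y (mem_cons_of_mem a hy), mul_smul_comm,
      ← mul_assoc, h a mem_cons_self, List.length_cons, pow_succ, mul_neg_one, neg_smul, neg_mul,
      smul_neg, mul_assoc]

theorem List.getElem_mul_prod_eraseIdx (L : List A) {n : ℕ} (hn : n < L.length)
    (h : ∀ y ∈ L.take n, y * L[n] = -(L[n] * y)) :
    L[n] * (L.eraseIdx n).prod = (-1 : R) ^ n • L.prod := by
  have hswap := prod_mul_eq_neg_one_pow_smul (R := R) h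
  rw [length_take_of_le hn.le] at hswap
  calc L[n] * (L.eraseIdx n).prod = L[n] * (L.take n).prod * (L.drop (n + 1)).prod := by
        rw [eraseIdx_eq_take_drop_succ, prod_append, mul_assoc]
    _ = (-1 : R) ^ n • ((-1 : R) ^ n • (L[n] * (L.take n).prod)) * (L.drop (n + 1)).prod := by
        rw [smul_smul, ← mul_pow, neg_one_mul, neg_neg, one_pow, one_smul]
    _ = (-1 : R) ^ n • L.prod := by
        rw [← hswap, smul_mul_assoc, mul_assoc, ← prod_cons, ← drop_eq_getElem_cons,
          ← prod_append, take_append_drop]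

theorem List.prod_reverse_ofFn_mul {l : ℕ} (x : A) (c : Fin l → A) (f : Fin l → R)
    (h : ∀ k, c k * x + x * c k = f k • 1) :
    (ofFn c).reverse.prod * x
      = ∑ k : Fin l, ((-1) ^ (k : ℕ) * f k) • ((ofFn c).eraseIdx k).reverse.prod
        + (-1 : R) ^ l • (x * (ofFn c).reverse.prod) := by
  induction l with
  | zero => simp
  | succ l ih =>
    have hx : c 0 * x = f 0 • 1 - x * c 0 := eq_sub_of_add_eq (h 0)
    simp only [ofFn_succ, reverse_cons, prod_append, prod_singleton, Fin.sum_univ_succ,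
      eraseIdx_cons_zero, eraseIdx_cons_succ, Fin.val_zero, Fin.val_succ]
    rw [mul_assoc, hx, mul_sub, mul_smul_comm, mul_one, ← mul_assoc,
      ih (fun i => c i.succ) (fun i => f i.succ) fun i => h i.succ]
    simp only [add_mul, Finset.sum_mul, smul_mul_assoc, pow_succ', pow_zero, one_mul, neg_mul,
      neg_smul, Finset.sum_neg_distrib, mul_assoc x]
    abel

theorem LinearMap.apply_prod_ofFn_mul_prod_reverse_ofFn (φ : A →ₗ[R] R) {l : ℕ}
    (b c : Fin l → A) (C v : A) (ω : Fin l → R) (j : Fin l)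
    (hφ : ∀ a, φ (C * a) = φ (b j * a)) (hbb : ∀ i, b i * b j = -(b j * b i))
    (hCb : ∀ i, C * b i = -(b i * C)) (hCc : ∀ k, C * c k + c k * C = ω k • 1)
    (hCv : C * v = 0) :
    φ ((List.ofFn b).prod * (List.ofFn c).reverse.prod * v)
      = ∑ k : Fin l, (-1) ^ ((j : ℕ) + (k : ℕ)) * ω k *
          φ (((List.ofFn b).eraseIdx j).prod * ((List.ofFn c).eraseIdx k).reverse.prod * v) := by
  set B := List.ofFn b
  have hB : b j * (B.eraseIdx j).prod = (-1 : R) ^ (j : ℕ) • B.prod := by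
    simpa [B] using B.getElem_mul_prod_eraseIdx (R := R) (n := j) (by simp [B]) fun y hy => by
      obtain ⟨i, rfl⟩ := List.mem_ofFn.mp (List.mem_of_mem_take hy); simpa [B] using hbb i
  have hBC : (B.eraseIdx j).prod * C = (-1 : R) ^ (l - 1) • (C * (B.eraseIdx j).prod) := by
    simpa [B, List.length_eraseIdx] using
      List.prod_mul_eq_neg_one_pow_smul (R := R) (x := C) (L := B.eraseIdx j) fun y hy => by
        obtain ⟨i, rfl⟩ := List.mem_ofFn.mp (List.eraseIdx_subset hy); rw [hCb, neg_neg]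
  have hMC := List.prod_reverse_ofFn_mul C c ω fun k => by rw [add_comm]; exact hCc k
  have hC : ∀ a, φ ((B.eraseIdx j).prod * (C * a))
      = (-1 : R) ^ (l - 1) * (-1) ^ (j : ℕ) * φ (B.prod * a) := fun a => by
    rw [← mul_assoc _ C, hBC, smul_mul_assoc, mul_assoc, map_smul, hφ, ← mul_assoc (b j), hB,
      smul_mul_assoc, map_smul, smul_smul, smul_eq_mul]
  set Φ := φ (B.prod * ((List.ofFn c).reverse.prod * v))
  have hexpand : 0 = ∑ k : Fin l, (-1 : R) ^ (k : ℕ) * ω k *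
        φ ((B.eraseIdx j).prod * (((List.ofFn c).eraseIdx k).reverse.prod * v))
      + (-1) ^ l * ((-1) ^ (l - 1) * (-1) ^ (j : ℕ) * Φ) :=
    calc (0 : R) = φ ((B.eraseIdx j).prod * ((List.ofFn c).reverse.prod * C * v)) := by
          rw [mul_assoc _ C, hCv, mul_zero, mul_zero, map_zero]
      _ = _ := by
          rw [hMC, add_mul, mul_add, map_add, Finset.sum_mul, Finset.mul_sum, map_sum,
            smul_mul_assoc, mul_assoc, ← hC]
          simp only [smul_mul_assoc, mul_smul_comm, map_smul, smul_eq_mul]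
  have hl_sign : (-1 : R) ^ l * (-1) ^ (l - 1) = -1 := by
    rw [← pow_add]; exact Odd.neg_one_pow ⟨l - 1, by have := j.pos; omega⟩
  have hj_sign : (-1 : R) ^ (j : ℕ) * (-1) ^ (j : ℕ) = 1 := by
    rw [← pow_add]; exact Even.neg_one_pow ⟨j, rfl⟩
  simp only [mul_assoc, pow_add, ← Finset.mul_sum] at hexpand ⊢
  linear_combination (-1 : R) ^ (j : ℕ) * hexpand
    + (-1 : R) ^ (j : ℕ) * (-1) ^ (j : ℕ) * Φ * hl_sign - Φ * hj_sign

end Anticommutation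

theorem NormedSpace.exp_mul_eq_add_mul_exp (𝕂 : Type*) {A : Type*} [RCLike 𝕂] [NormedRing A]
    [NormedAlgebra 𝕂 A] [CompleteSpace A] {X y c : A} (h : X * y - y * X = c)
    (hc : Commute X c) : exp X * y = (y + c) * exp X := by
  -- `t ↦ e^{-tX} (y + t c) e^{tX}` is constant, since its derivative is
  -- `e^{-tX} (c - [X, y + t c]) e^{tX} = 0`.
  let k : 𝕂 → A := fun t => exp (t • -X) * (y + t • c) * exp (t • X)
  have hk : ∀ t, HasDerivAt k 0 t := by
    intro t
    have hzero : -X * (y + t • c) + c + (y + t • c) * X = 0 := calc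
      _ = (c - (X * y - y * X)) + t • (c * X - X * c) := by
        simp only [mul_add, add_mul, neg_mul, mul_smul_comm, smul_mul_assoc, smul_sub, smul_neg]
        abel
      _ = 0 := by rw [h, hc.eq]; simp
    refine (((hasDerivAt_exp_smul_const (-X) t).mul
      (((hasDerivAt_id t).smul_const c).const_add y)).mul
        (hasDerivAt_exp_smul_const' X t)).congr_deriv ?_
    simp only [Pi.mul_apply, id, one_smul]
    rw [mul_assoc _ (-X), ← mul_add, ← mul_assoc _ X, mul_assoc (exp _) _ X, ← add_mul,
      ← mul_add, hzero]
    simp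
  have hconst :=
    is_const_of_deriv_eq_zero (fun t => (hk t).differentiableAt) (fun t => (hk t).deriv) 1 0
  let : NormedAlgebra ℚ A := NormedAlgebra.restrictScalars ℚ 𝕂 A
  have hinv : exp X * exp (-X) = 1 := by
    rw [← exp_add_of_commute (Commute.neg_right (Commute.refl X)), add_neg_cancel, exp_zero]
  simpa [k, ← mul_assoc, hinv] using congrArg (exp X * ·) hconst.symm

theorem apply_exp_sub_mul_eq_of_commutator (𝕂 : Type*) {A M F : Type*} [RCLike 𝕂] [NormedRing A]
    [NormedAlgebra 𝕂 A] [CompleteSpace A] [AddCommGroup M] [FunLike F A M]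
    [AddMonoidHomClass F A M] (Z : F) {Ω₀ Ω b C : A} (hΩ : Commute Ω₀ Ω)
    (hb : Ω * b - b * Ω = -C) (hC : Commute Ω C) (hZ : ∀ a, Z (exp Ω₀ * b * a) = 0) (a : A) :
    Z (exp (Ω₀ - Ω) * (C * a)) = Z (exp (Ω₀ - Ω) * (b * a)) := by
  let : NormedAlgebra ℚ A := NormedAlgebra.restrictScalars ℚ 𝕂 A
  have hexp : exp (-Ω) * b = (b + C) * exp (-Ω) :=
    exp_mul_eq_add_mul_exp 𝕂 (by rw [← neg_neg C, ← hb]; noncomm_ring) hC.neg_left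
  have hsplit : exp (Ω₀ - Ω) = exp Ω₀ * exp (-Ω) := by
    rw [sub_eq_add_neg, exp_add_of_commute hΩ.neg_right]
  calc Z (exp (Ω₀ - Ω) * (C * a))
      = Z (exp Ω₀ * (exp (-Ω) * b) * a - exp Ω₀ * b * (exp (-Ω) * a)) := by
        rw [hsplit, hexp, mul_assoc, ← mul_assoc (exp (-Ω)), (hC.neg_left.exp_left).eq]
        noncomm_ring
    _ = Z (exp (Ω₀ - Ω) * (b * a)) := by
        rw [map_sub, hZ, sub_zero, hsplit]; noncomm_ring

theorem laplace_recursion_general {A : Type*} [NormedRing A] [NormedAlgebra ℂ A]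
    [CompleteSpace A] (Z : A →L[ℂ] ℂ) {l : ℕ} (Ω₀ Ωhat v : A)
    (b c C : Fin l → A) (ω : Fin l × Fin l → ℂ)
    (hΩ : Ω₀ * Ωhat = Ωhat * Ω₀)
    (hi₁ : ∀ j, Ωhat * b j - b j * Ωhat = -(C j))
    (hi₂ : ∀ j, Ωhat * C j = C j * Ωhat)
    (hii : ∀ j, ∀ a : A, Z (exp Ω₀ * b j * a) = 0)
    (hbb : ∀ i j, b i * b j = -(b j * b i))
    (hCb : ∀ i j, C j * b i = -(b i * C j))
    (hCc : ∀ j k, C j * c k + c k * C j = ω (j, k) • (1 : A))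
    (hCv : ∀ j, C j * v = 0)
    (j : Fin l) :
    Z (exp (Ω₀ - Ωhat) * (List.ofFn b).prod * (List.ofFn c).reverse.prod * v)
      = ∑ k : Fin l, (-1 : ℂ) ^ ((j : ℕ) + (k : ℕ)) * ω (j, k) *
          Z (exp (Ω₀ - Ωhat) * ((List.ofFn b).eraseIdx (j : ℕ)).prod *
              ((List.ofFn c).eraseIdx (k : ℕ)).reverse.prod * v) := by
  have hZ := apply_exp_sub_mul_eq_of_commutator ℂ Z hΩ (hi₁ j) (hi₂ j) (hii j)
  simpa [mul_assoc] using
    (Z.toLinearMap ∘ₗ LinearMap.mulLeft ℂ (exp (Ω₀ - Ωhat))).apply_prod_ofFn_mul_prod_reverse_ofFn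
      b c (C j) v (fun k => ω (j, k)) j hZ (hbb · j) (hCb · j) (hCc j) (hCv j)

/-- Lemma A.4 (abstract form): the Laplace-expansion recursion
`Z(e^{Ω₀−Ω̂}·(b_1⋯b_l)·(c_l⋯c_1)·v)
  = Σ_k (−1)^{j+k} ω_{j,k} Z(e^{Ω₀−Ω̂}·(b_1⋯b̂_j⋯b_l)·(c_l⋯ĉ_k⋯c_1)·v)`. -/
theorem laplace_recursion {A : Type*} [NormedRing A] [NormedAlgebra ℂ A]
    [CompleteSpace A] (Z : A →L[ℂ] ℂ) {l : ℕ} (Ω₀ Ωhat v : A)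
    (b c C : Fin l → A) (ω : Fin l × Fin l → ℂ)
    (hΩ : Ω₀ * Ωhat = Ωhat * Ω₀)
    (hi₁ : ∀ j, Ωhat * b j - b j * Ωhat = -(C j))
    (hi₂ : ∀ j, Ωhat * C j = C j * Ωhat)
    (hii : ∀ j, ∀ a : A, Z (exp Ω₀ * b j * a) = 0)
    (hbb : ∀ i j, b i * b j = -(b j * b i))
    (hbc : ∀ i k, b i * c k = -(c k * b i))
    (hCb : ∀ i j, C j * b i = -(b i * C j))
    (hCc : ∀ j k, C j * c k + c k * C j = ω (j, k) • (1 : A))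
    (hCv : ∀ j, C j * v = 0)
    (j : Fin l) :
    Z (exp (Ω₀ - Ωhat) * (List.ofFn b).prod * (List.ofFn c).reverse.prod * v)
      = ∑ k : Fin l, (-1 : ℂ) ^ ((j : ℕ) + (k : ℕ)) * ω (j, k) *
          Z (exp (Ω₀ - Ωhat) * ((List.ofFn b).eraseIdx (j : ℕ)).prod *
              ((List.ofFn c).eraseIdx (k : ℕ)).reverse.prod * v) :=
  laplace_recursion_general Z Ω₀ Ωhat v b c C ω hΩ hi₁ hi₂ hii hbb hCb hCc hCv j
end

section
/- Let f : ℝ → ℂ be smooth, ℓ ∈ ℤ, and k ∈ ℕ. Define the operator 𝒟 on smooth functions by (𝒟g)(u) = (1/2)e^{−2u}·g′(u), and define Q_0 = f and Q_{i+1}(u) = (−ℓ + i)·Q_i(u) − (1/2)·Q_i′(u) for i = 0,…,k−1 (i.e. Q_k = (−ℓ − ½∂_u)(−ℓ − ½∂_u + 1)⋯(−ℓ − ½∂_u + k − 1) f). Then for every u ∈ ℝ, (𝒟^k (u ↦ e^{2uℓ} f(u)))(u) = e^{2u(ℓ−k)}·(−1)^k·Q_k(u). In particular, evaluating at u = 0,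 ∂_{ζ²}^k (ζ^{2ℓ} f(ln ζ))|_{ζ²=1} = (−1)^k Q_k(0). (This is the identity of Appendix B of the paper, used to translate between multiplicative spectral parameters ζ and additive spectral parameters u = ln ζ in the derivatives of ω.) -/
/-- Appendix B identity: with `(𝒟g)(u) = ½ e^{−2u} g′(u)`, `Q_0 = f` and
`Q_{i+1} = (−ℓ + i)·Q_i − ½ Q_i′`, one has
`𝒟^k (u ↦ e^{2uℓ} f(u)) (u) = e^{2u(ℓ−k)} (−1)^k Q_k(u)`; in particular
`𝒟^k(e^{2uℓ}f)(0) = (−1)^k Q_k(0)`. -/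
theorem multiplicative_to_additive_derivatives (f : ℝ → ℂ) (hf : ContDiff ℝ (⊤ : ℕ∞) f)
    (ℓ : ℤ) (k : ℕ) (D : (ℝ → ℂ) → (ℝ → ℂ)) (Q : ℕ → (ℝ → ℂ))
    (hD : ∀ (g : ℝ → ℂ) (u : ℝ), D g u = (1 / 2) * (Real.exp (-2 * u) : ℂ) * deriv g u)
    (hQ0 : Q 0 = f)
    (hQs : ∀ (i : ℕ) (u : ℝ),
      Q (i + 1) u = (-(ℓ : ℂ) + (i : ℂ)) * Q i u - (1 / 2) * deriv (Q i) u) :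
    (∀ u : ℝ, (D^[k] (fun v : ℝ => (Real.exp (2 * v * (ℓ : ℝ)) : ℂ) * f v)) u
        = (Real.exp (2 * u * ((ℓ : ℝ) - (k : ℝ))) : ℂ) * (-1 : ℂ) ^ k * Q k u) ∧
    (D^[k] (fun v : ℝ => (Real.exp (2 * v * (ℓ : ℝ)) : ℂ) * f v)) 0
      = (-1 : ℂ) ^ k * Q k 0 := by
  have hf' : ContDiff ℝ (⊤ : ℕ∞) f := hf.of_le (by simp)
  -- each Q i is smooth
  have hQsmooth : ∀ i, ContDiff ℝ (⊤ : ℕ∞) (Q i) := by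
    intro i
    induction i with
    | zero => rw [hQ0]; exact hf'
    | succ n ih =>
      have heq : Q (n + 1)
          = fun u => (-(ℓ : ℂ) + (n : ℂ)) * Q n u - (1 / 2) * deriv (Q n) u :=
        funext (hQs n)
      rw [heq]
      exact (contDiff_const.mul ih).sub
        (contDiff_const.mul (contDiff_infty_iff_deriv.mp ih).2)
  have main : ∀ m : ℕ, ∀ u : ℝ,
      (D^[m] (fun v : ℝ => (Real.exp (2 * v * (ℓ : ℝ)) : ℂ) * f v)) u
        = (Real.exp (2 * u * ((ℓ : ℝ) - (m : ℝ))) : ℂ) * (-1 : ℂ) ^ m * Q m u := by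
    intro m
    induction m with
    | zero => intro u; simp [hQ0]
    | succ n ih =>
      intro u
      rw [Function.iterate_succ_apply', hD]
      have hfn : D^[n] (fun v : ℝ => (Real.exp (2 * v * (ℓ : ℝ)) : ℂ) * f v)
          = fun u => (Real.exp (2 * u * ((ℓ : ℝ) - (n : ℝ))) : ℂ) * (-1 : ℂ) ^ n * Q n u :=
        funext ih
      rw [hfn]
      set c : ℝ := (ℓ : ℝ) - (n : ℝ) with hc
      -- derivative of the exponential factor
      have hE : HasDerivAt (fun v : ℝ => ((Real.exp (2 * v * c) : ℝ) : ℂ))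
          ((2 * c : ℝ) * (Real.exp (2 * u * c) : ℂ)) u := by
        have h1 : HasDerivAt (fun v : ℝ => 2 * v * c) (2 * c) u := by
          simpa using ((hasDerivAt_id u).const_mul 2).mul_const c
        have h2 : HasDerivAt (fun v : ℝ => Real.exp (2 * v * c))
            (Real.exp (2 * u * c) * (2 * c)) u := (Real.hasDerivAt_exp _).comp u h1
        have := h2.ofReal_comp
        simpa [mul_comm] using this
      have hQd : HasDerivAt (Q n) (deriv (Q n) u) u :=
        ((hQsmooth n).differentiable (by simp) u).hasDerivAt
      have hprod : HasDerivAt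
          (fun v : ℝ => (Real.exp (2 * v * c) : ℂ) * (-1 : ℂ) ^ n * Q n v)
          ((2 * c : ℝ) * (Real.exp (2 * u * c) : ℂ) * (-1 : ℂ) ^ n * Q n u
            + (Real.exp (2 * u * c) : ℂ) * (-1 : ℂ) ^ n * deriv (Q n) u) u := by
        have := ((hE.mul_const ((-1 : ℂ) ^ n)).mul hQd)
        simpa [mul_assoc, Pi.mul_def] using this
      rw [hprod.deriv]
      rw [hQs n u]
      have hc' : (c : ℂ) = (ℓ : ℂ) - (n : ℂ) := by rw [hc]; push_cast; ring
      push_cast [hc']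
      have hexp : Complex.exp (-2 * (u : ℂ)) * Complex.exp (2 * u * ((ℓ : ℂ) - n))
          = Complex.exp (2 * u * ((ℓ : ℂ) - (n + 1))) := by
        rw [← Complex.exp_add]; ring_nf
      linear_combination ((-1 : ℂ) ^ (n + 1) *
        ((-(ℓ : ℂ) + (n : ℂ)) * Q n u - (1 / 2) * deriv (Q n) u)) * hexp
  exact ⟨main k, by simpa using main k 0⟩
end
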